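/- The poset of 312-avoiding real TITOs under the Dyer order is order-isomorphic to the poset of 132-avoiding co-real TITOs under the Dyer order. Moreover, the poset of 312-avoiding real TITOs is self-dual: there exists a bijection φ of the set of 312-avoiding real TITOs to itself such that for all 312-avoiding real TITOs x and y, Inv(x) ⊆ Inv(y) if and only if Inv(φ(y)) ⊆ Inv(φ(x)). -/

import Mathlib

structure TITO (n : ℕ) where
  rel : ℤ → ℤ → Prop
  refl : ∀ a, rel a a
  antisymm : ∀ a b, rel a b → rel b a → a = b
  trans : ∀ a b c, rel a b → rel b c → rel a c
  total : ∀ a b, rel a b ∨ rel b a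
  invariant : ∀ a b, rel a b ↔ rel (a + n) (b + n)

namespace TITO

variable {n : ℕ}

/-- The inversion set of a TITO. -/
def Inversions (t : TITO n) : Set (ℤ × ℤ) := {p | p.1 < p.2 ∧ t.rel p.2 p.1}

/-- A TITO is 312-avoiding if there are no integers `a < b < c` with `c ≼ a` and `a ≼ b`. -/
def Avoids312 (t : TITO n) : Prop :=
  ¬ ∃ a b c : ℤ, a < b ∧ b < c ∧ t.rel c a ∧ t.rel a b

/-- A TITO is 132-avoiding if there are no integers `a < b < c` with `a ≼ c` and `c ≼ b`. -/
def Avoids132 (t : TITO n) : Prop :=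
  ¬ ∃ a b c : ℤ, a < b ∧ b < c ∧ t.rel a c ∧ t.rel c b

/-- A set is order-convex for a TITO. -/
def OrderConvex (t : TITO n) (S : Set ℤ) : Prop :=
  ∀ x ∈ S, ∀ z ∈ S, ∀ y : ℤ, t.rel x y → t.rel y z → y ∈ S

/-- A block of a TITO: an order-convex set with no minimal and no maximal element in which
all intervals are finite. -/
def IsBlock (t : TITO n) (I : Set ℤ) : Prop :=
  t.OrderConvex I ∧
  (∀ a ∈ I, ∃ b ∈ I, b ≠ a ∧ t.rel b a) ∧
  (∀ a ∈ I, ∃ b ∈ I, b ≠ a ∧ t.rel a b) ∧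
  (∀ a ∈ I, ∀ c ∈ I, t.rel a c → {b : ℤ | t.rel a b ∧ t.rel b c}.Finite)

/-- A block is waxing if `a ≼ a + n` for every `a` in it. -/
def Waxing (t : TITO n) (I : Set ℤ) : Prop := ∀ a ∈ I, t.rel a (a + n)

/-- A block is waning if `a + n ≼ a` for every `a` in it. -/
def Waning (t : TITO n) (I : Set ℤ) : Prop := ∀ a ∈ I, t.rel (a + n) a

/-- A TITO is real if `a ≼ a + n` whenever the residue class of `a` mod `n` is order-convex. -/
def IsReal (t : TITO n) : Prop :=
  ∀ a : ℤ, t.OrderConvex {x : ℤ | ∃ k : ℤ, x = a + k * n} → t.rel a (a + n)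

/-- A TITO is co-real if `a + n ≼ a` whenever the residue class of `a` mod `n` is order-convex. -/
def IsCoReal (t : TITO n) : Prop :=
  ∀ a : ℤ, t.OrderConvex {x : ℤ | ∃ k : ℤ, x = a + k * n} → t.rel (a + n) a

/-- `(a, b)` with `a < b` is a lower wall if `b ≼ a` is a cover relation of the total order. -/
def LowerWall (t : TITO n) (a b : ℤ) : Prop :=
  a < b ∧ t.rel b a ∧ ∀ z : ℤ, z ≠ a → z ≠ b → ¬ (t.rel b z ∧ t.rel z a)

end TITO

/-!
A 312-avoiding TITO `≼` is determined by its reach function `r x = sup {j | x + j ≼ x} ∈ ℕ∞`: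
for `x < y`, `y ≼ x` iff `y - x ≤ r x`. Drawing an arc from `x` to `x + r x`, the functions
that arise are exactly the `n`-periodic ones whose arcs are nested, realness says that the
classes mod `n` on which `r = ⊤` are not exactly one, and inclusion of inversion sets becomes
the pointwise order of reach functions.

The self-duality is a Kreweras-type complement of reach functions: `dualReach r x` is the
distance from `-x - 1` back to the start of the nearest arc reaching `-x`. It is antitone and
an involution on nested functions. It may create a single class on which it is `⊤`; capping
that class at `n - 1` is undone on the way back, because the arc on the other side then has
length exactly `n - 1`. Finally the reflection `a ↦ -a` turns 312-avoiding real TITOs into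
132-avoiding co-real ones, again reversing inclusion of inversion sets.
-/

open scoped Pointwise

def residueClass (n : ℕ) (a : ℤ) : Set ℤ := {x | ∃ k : ℤ, x = a + k * n}

section

variable {n : ℕ} {a b x : ℤ}

theorem mem_residueClass : x ∈ residueClass n a ↔ (n : ℤ) ∣ x - a := by
  refine ⟨fun ⟨k, hk⟩ => ⟨k, by rw [hk]; ring⟩, fun ⟨k, hk⟩ => ⟨k, by linear_combination hk⟩⟩

theorem residueClass_eq_of_dvd (h : (n : ℤ) ∣ b - a) :
    residueClass n b = residueClass n a := by
  ext x
  simp only [mem_residueClass]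
  exact ⟨fun hx => by simpa using dvd_add hx h, fun hx => by simpa using dvd_sub hx h⟩

theorem neg_residueClass : -residueClass n a = residueClass n (-a) := by
  ext x
  rw [Set.mem_neg, mem_residueClass, mem_residueClass, ← dvd_neg]
  ring_nf

end

namespace TITO

variable {n : ℕ} {t t₁ t₂ : TITO n}

@[ext]
theorem ext (h : ∀ a b, t₁.rel a b ↔ t₂.rel a b) : t₁ = t₂ := by
  cases t₁; cases t₂
  congr
  funext a b
  exact propext (h a b)

theorem rel_of_not_rel (t : TITO n) {a b : ℤ} (h : ¬ t.rel a b) : t.rel b a :=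
  (t.total a b).resolve_left h

def neg (t : TITO n) : TITO n where
  rel a b := t.rel (-a) (-b)
  refl a := t.refl (-a)
  antisymm a b h₁ h₂ := neg_injective (t.antisymm _ _ h₁ h₂)
  trans a b c := t.trans _ _ _
  total a b := t.total _ _
  invariant a b := by
    have h := t.invariant (-(a + n)) (-(b + n))
    rwa [show -(a + n) + n = -a by ring, show -(b + n) + n = -b by ring, Iff.comm] at h

@[simp]
theorem neg_rel (t : TITO n) {a b : ℤ} : t.neg.rel a b ↔ t.rel (-a) (-b) := Iff.rfl

@[simp]
theorem neg_neg (t : TITO n) : t.neg.neg = t := by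
  ext a b
  simp

theorem inversions_neg_subset_neg (h : t₁.Inversions ⊆ t₂.Inversions) :
    t₂.neg.Inversions ⊆ t₁.neg.Inversions := by
  rintro ⟨a, b⟩ ⟨hab, hba⟩
  refine ⟨hab, t₁.rel_of_not_rel fun h₁ => hab.ne ?_⟩
  have h₂ : (-b, -a) ∈ t₂.Inversions := h ⟨neg_lt_neg hab, h₁⟩
  exact neg_injective (t₂.antisymm (-a) (-b) h₂.2 hba)

theorem inversions_neg_subset_neg_iff :
    t₁.neg.Inversions ⊆ t₂.neg.Inversions ↔ t₂.Inversions ⊆ t₁.Inversions :=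
  ⟨fun h => by simpa using inversions_neg_subset_neg h, inversions_neg_subset_neg⟩

theorem avoids132_neg_iff : t.neg.Avoids132 ↔ t.Avoids312 := by
  refine not_congr ⟨fun ⟨a, b, c, hab, hbc, h₁, h₂⟩ => ?_, fun ⟨a, b, c, hab, hbc, h₁, h₂⟩ => ?_⟩
  · exact ⟨-c, -b, -a, neg_lt_neg hbc, neg_lt_neg hab, h₁, h₂⟩
  · exact ⟨-c, -b, -a, neg_lt_neg hbc, neg_lt_neg hab, by simpa using h₁, by simpa using h₂⟩

theorem avoids312_neg_iff : t.neg.Avoids312 ↔ t.Avoids132 := by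
  simpa using (avoids132_neg_iff (t := t.neg)).symm

theorem orderConvex_neg_iff {S : Set ℤ} :
    t.neg.OrderConvex S ↔ t.OrderConvex (-S) := by
  refine ⟨fun h x hx z hz y hxy hyz => ?_, fun h x hx z hz y hxy hyz => ?_⟩
  · exact h (-x) hx (-z) hz (-y) (by simpa using hxy) (by simpa using hyz)
  · simpa using h (-x) (by simpa using hx) (-z) (by simpa using hz) (-y) hxy hyz

theorem isCoReal_neg_iff : t.neg.IsCoReal ↔ t.IsReal := by
  have hcls (a : ℤ) : -residueClass n (-(a + n)) = residueClass n a := by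
    rw [neg_residueClass, _root_.neg_neg]; exact residueClass_eq_of_dvd ⟨1, by ring⟩
  change (∀ a, t.neg.OrderConvex (residueClass n a) → _) ↔
    ∀ b, t.OrderConvex (residueClass n b) → _
  refine ⟨fun h b hb => ?_, fun h a ha => ?_⟩
  · simpa using h (-(b + n)) (by rwa [orderConvex_neg_iff, hcls])
  · rw [orderConvex_neg_iff, ← hcls, _root_.neg_neg] at ha
    simpa using h _ ha

theorem isReal_neg_iff : t.neg.IsReal ↔ t.IsCoReal := by
  simpa using (isCoReal_neg_iff (t := t.neg)).symm

def negEquiv :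
    {t : TITO n // t.Avoids312 ∧ t.IsReal} ≃ {t : TITO n // t.Avoids132 ∧ t.IsCoReal} where
  toFun t := ⟨t.1.neg, avoids132_neg_iff.2 t.2.1, isCoReal_neg_iff.2 t.2.2⟩
  invFun t := ⟨t.1.neg, avoids312_neg_iff.2 t.2.1, isReal_neg_iff.2 t.2.2⟩
  left_inv t := Subtype.ext t.1.neg_neg
  right_inv t := Subtype.ext t.1.neg_neg

end TITO

theorem Function.Periodic.eq_of_dvd {α : Type*} {f : ℤ → α} {c : ℤ} (hf : f.Periodic c)
    {x y : ℤ} (h : c ∣ y - x) : f y = f x := by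
  obtain ⟨k, hk⟩ := h
  rw [show y = x + k * c by linear_combination hk]
  exact (hf.int_mul k) x

def IsNested (u : ℤ → ℕ∞) : Prop :=
  ∀ a : ℤ, ∀ j k : ℕ, (j : ℕ∞) ≤ u a → (k : ℕ∞) ≤ u (a + j) → ((j + k : ℕ) : ℕ∞) ≤ u a

def IsUniqueTopClass (n : ℕ) (u : ℤ → ℕ∞) (p : ℤ) : Prop :=
  u p = ⊤ ∧ ∀ b, u b = ⊤ → (n : ℤ) ∣ b - p

/-- Reading `u x` as the length of the longest arc starting at `x`: the distance from `-x - 1`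
back to the start of the nearest arc that reaches `-x`, or `⊤` if there is none. -/
noncomputable def dualReach (u : ℤ → ℕ∞) (x : ℤ) : ℕ∞ :=
  ⨅ (k : ℕ) (_ : (k : ℕ∞) < u (-x - 1 - k)), (k : ℕ∞)

section

variable {n : ℕ} {u : ℤ → ℕ∞}

theorem IsNested.apply_add_le (hu : IsNested u) {x : ℤ} {c j : ℕ} (hc : u x = c) (hj : j ≤ c) :
    u (x + j) ≤ (c - j : ℕ) := by
  by_contra! h
  have := hu x j (c - j + 1) (by rw [hc]; exact_mod_cast hj) (Order.add_one_le_of_lt h)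
  rw [hc, Nat.cast_le] at this
  omega

theorem IsNested.le_of_ne_top (hu : IsNested u) (hper : u.Periodic n) (hn : 0 < n) {x : ℤ}
    (hx : u x ≠ ⊤) : u x ≤ (n - 1 : ℕ) := by
  obtain ⟨c, hc⟩ := ENat.ne_top_iff_exists.mp hx
  rw [← hc, Nat.cast_le]
  by_contra! h
  have := hu.apply_add_le hc.symm (j := n) (by omega)
  rw [hper, ← hc, Nat.cast_le] at this
  omega

theorem IsUniqueTopClass.of_eq_top {p x : ℤ} (h : IsUniqueTopClass n u p) (hx : u x = ⊤) :
    IsUniqueTopClass n u x :=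
  ⟨hx, fun b hb => by simpa using dvd_sub (h.2 b hb) (h.2 x hx)⟩

theorem natCast_le_dualReach_iff {x : ℤ} {m : ℕ} :
    (m : ℕ∞) ≤ dualReach u x ↔ ∀ i < m, u (-x - 1 - i) ≤ i := by
  simp only [dualReach, le_iInf_iff, Nat.cast_le]
  exact forall_congr' fun i =>
    ⟨fun h hi => not_lt.1 fun h' => absurd hi (not_lt.2 (h h')),
      fun h h' => not_lt.1 fun hi => absurd h' (not_lt.2 (h hi))⟩

theorem dualReach_le {x : ℤ} {k : ℕ} (h : (k : ℕ∞) < u (-x - 1 - k)) : dualReach u x ≤ k :=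
  iInf₂_le k h

theorem dualReach_eq_top_iff {x : ℤ} : dualReach u x = ⊤ ↔ ∀ i : ℕ, u (-x - 1 - i) ≤ i := by
  simp only [ENat.eq_top_iff_forall_ge, natCast_le_dualReach_iff]
  exact ⟨fun h i => h (i + 1) i (by omega), fun h _ i _ => h i⟩

theorem antitone_dualReach : Antitone dualReach := fun _ _ h _ =>
  le_iInf₂ fun k hk => iInf₂_le k (hk.trans_le (h _))

theorem periodic_dualReach (hu : u.Periodic n) : (dualReach u).Periodic n := by
  intro x
  simp only [dualReach, show ∀ k : ℤ, -(x + n) - 1 - k = -x - 1 - k - n by intro; ring,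
    hu.sub_eq]

theorem isNested_dualReach (u : ℤ → ℕ∞) : IsNested (dualReach u) := by
  intro x j k hj hk
  rw [natCast_le_dualReach_iff] at *
  intro i hi
  rcases lt_or_ge i j with hij | hij
  · exact hj i hij
  · have := hk (i - j) (by omega)
    rw [show -(x + j) - 1 - ((i - j : ℕ) : ℤ) = -x - 1 - i by omega] at this
    exact this.trans (by gcongr; omega)

theorem IsNested.natCast_lt_dualReach (hu : IsNested u) {x : ℤ} {c : ℕ} (hc : u x = c) :
    (c : ℕ∞) < dualReach u (-x - 1 - c) := by
  rw [← ENat.add_one_le_iff (ENat.natCast_ne_top c), ← Nat.cast_add_one, natCast_le_dualReach_iff]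
  intro i hi
  rw [show -(-x - 1 - c) - 1 - (i : ℤ) = x + (c - i : ℕ) by omega]
  exact (hu.apply_add_le hc (Nat.sub_le c i)).trans (by gcongr; omega)

theorem IsNested.dualReach_dualReach (hu : IsNested u) : dualReach (dualReach u) = u := by
  funext x
  refine le_antisymm ?_ ?_
  · cases hx : u x with
    | top => exact le_top
    | coe c => exact dualReach_le (hu.natCast_lt_dualReach hx)
  · rw [← ENat.forall_natCast_le_iff_le]
    intro m hm
    rw [natCast_le_dualReach_iff]
    intro i hi
    refine dualReach_le ?_
    rw [show -(-x - 1 - i) - 1 - (i : ℤ) = x by ring]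
    exact lt_of_lt_of_le (Nat.cast_lt.mpr hi) hm

theorem dualReach_ne_top_of_eq_top (hu : u.Periodic n) (hn : 0 < n) {c : ℤ}
    (hc : u c = ⊤) (x : ℤ) : dualReach u x ≠ ⊤ := by
  have hr : 0 ≤ (-x - 1 - c) % n := Int.emod_nonneg _ (by omega)
  rw [Ne, dualReach_eq_top_iff, not_forall]
  refine ⟨((-x - 1 - c) % n).toNat, ?_⟩
  rw [hu.eq_of_dvd (x := c), hc]
  · simp
  · rw [Int.toNat_of_nonneg hr, show -x - 1 - (-x - 1 - c) % n - c = -x - 1 - c - (-x - 1 - c) % n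
      by ring]
    exact Int.dvd_self_sub_of_emod_eq rfl

/-- An arc from `-p` shorter than `n - 1` would leave the gap at its end uncrossed, giving
`dualReach u` a second top class. -/
theorem IsNested.eq_of_isUniqueTopClass_dualReach (hu : IsNested u) (hper : u.Periodic n)
    (hn : 0 < n) {p : ℤ} (hp : IsUniqueTopClass n (dualReach u) p) : u (-p) = (n - 1 : ℕ) := by
  have hgap := dualReach_eq_top_iff.1 hp.1
  have hle : u (-p) ≤ (n - 1 : ℕ) := by
    simpa [show -p - 1 - ((n - 1 : ℕ) : ℤ) = -p - n by omega, hper.sub_eq] using hgap (n - 1)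
  obtain ⟨c, hc⟩ := ENat.ne_top_iff_exists.1 (ne_top_of_le_ne_top (ENat.natCast_ne_top _) hle)
  rw [← hc, Nat.cast_le] at hle
  rw [← hc, Nat.cast_inj]
  by_contra hne
  have htop : dualReach u (p - c - 1) = ⊤ := by
    rw [dualReach_eq_top_iff]
    intro i
    rcases lt_or_ge c i with hci | hic
    · have := hgap (i - c - 1)
      rw [show -p - 1 - ((i - c - 1 : ℕ) : ℤ) = -(p - c - 1) - 1 - i by omega] at this
      exact this.trans (by gcongr; omega)
    · rw [show -(p - c - 1) - 1 - (i : ℤ) = -p + (c - i : ℕ) by omega]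
      exact (hu.apply_add_le hc.symm (Nat.sub_le c i)).trans (by gcongr; omega)
  have := Int.natAbs_le_of_dvd_ne_zero (hp.2 _ htop) (by omega)
  omega

end

open Classical in
noncomputable def capUniqueTop (n : ℕ) (u : ℤ → ℕ∞) (x : ℤ) : ℕ∞ :=
  if IsUniqueTopClass n u x then ((n - 1 : ℕ) : ℕ∞) else u x

section

variable {n : ℕ} {u v : ℤ → ℕ∞}

theorem capUniqueTop_of_isUniqueTopClass {x : ℤ} (h : IsUniqueTopClass n u x) :
    capUniqueTop n u x = (n - 1 : ℕ) :=
  if_pos h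

theorem capUniqueTop_of_not_isUniqueTopClass {x : ℤ} (h : ¬ IsUniqueTopClass n u x) :
    capUniqueTop n u x = u x :=
  if_neg h

theorem capUniqueTop_eq_self (h : ∀ p, ¬ IsUniqueTopClass n u p) : capUniqueTop n u = u :=
  funext fun x => capUniqueTop_of_not_isUniqueTopClass (h x)

theorem capUniqueTop_le : capUniqueTop n u ≤ u := by
  intro x
  by_cases hx : IsUniqueTopClass n u x
  · exact le_top.trans_eq hx.1.symm
  · rw [capUniqueTop_of_not_isUniqueTopClass hx]

theorem IsUniqueTopClass.iff_dvd (hper : u.Periodic n) {p x : ℤ} (hp : IsUniqueTopClass n u p) :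
    IsUniqueTopClass n u x ↔ (n : ℤ) ∣ x - p :=
  ⟨fun hx => hp.2 x hx.1, fun hx => hp.of_eq_top (by rw [hper.eq_of_dvd hx, hp.1])⟩

theorem IsUniqueTopClass.capUniqueTop_eq (hper : u.Periodic n) {p : ℤ}
    (hp : IsUniqueTopClass n u p) (y : ℤ) :
    capUniqueTop n u y = if (n : ℤ) ∣ y - p then ((n - 1 : ℕ) : ℕ∞) else u y := by
  split_ifs with hy
  · exact capUniqueTop_of_isUniqueTopClass ((hp.iff_dvd hper).2 hy)
  · exact capUniqueTop_of_not_isUniqueTopClass (mt (hp.iff_dvd hper).1 hy)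

theorem periodic_capUniqueTop (hper : u.Periodic n) : (capUniqueTop n u).Periodic n := by
  intro x
  by_cases hx : IsUniqueTopClass n u x
  · rw [capUniqueTop_of_isUniqueTopClass hx, capUniqueTop_of_isUniqueTopClass
      ((hx.iff_dvd hper).2 ⟨1, by ring⟩)]
  · have hxn : ¬ IsUniqueTopClass n u (x + n) := fun h => hx ((h.iff_dvd hper).2 ⟨-1, by ring⟩)
    rw [capUniqueTop_of_not_isUniqueTopClass hx, capUniqueTop_of_not_isUniqueTopClass hxn, hper]

theorem not_isUniqueTopClass_capUniqueTop (p : ℤ) : ¬ IsUniqueTopClass n (capUniqueTop n u) p := by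
  intro ⟨hp, hcls⟩
  have hpu : ¬ IsUniqueTopClass n u p := fun h => by
    simp [capUniqueTop_of_isUniqueTopClass h] at hp
  rw [capUniqueTop_of_not_isUniqueTopClass hpu] at hp
  obtain ⟨b, hb, hbp⟩ : ∃ b, u b = ⊤ ∧ ¬ (n : ℤ) ∣ b - p := by
    simpa [IsUniqueTopClass, hp] using hpu
  have hbu : ¬ IsUniqueTopClass n u b := fun h => hbp (by simpa using dvd_neg.2 (h.2 p hp))
  exact hbp (hcls b (by rw [capUniqueTop_of_not_isUniqueTopClass hbu, hb]))

theorem IsNested.capUniqueTop_mono (hu : IsNested u) (hper : u.Periodic n) (hn : 0 < n)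
    (huv : u ≤ v) : capUniqueTop n u ≤ capUniqueTop n v := by
  intro x
  by_cases hvx : IsUniqueTopClass n v x
  · rw [capUniqueTop_of_isUniqueTopClass hvx]
    by_cases hux : IsUniqueTopClass n u x
    · rw [capUniqueTop_of_isUniqueTopClass hux]
    · rw [capUniqueTop_of_not_isUniqueTopClass hux]
      refine hu.le_of_ne_top hper hn fun htop => hux ⟨htop, fun b hb => hvx.2 b ?_⟩
      exact top_le_iff.1 (hb ▸ huv b)
  · rw [capUniqueTop_of_not_isUniqueTopClass hvx]
    exact (capUniqueTop_le x).trans (huv x)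

theorem IsNested.isNested_capUniqueTop_dualReach (hu : IsNested u) (hper : u.Periodic n)
    (hn : 0 < n) : IsNested (capUniqueTop n (dualReach u)) := by
  set w := dualReach u
  intro a j k hj hk
  by_cases ha : IsUniqueTopClass n w a
  · rw [capUniqueTop_of_isUniqueTopClass ha, Nat.cast_le] at hj ⊢
    rcases Nat.eq_zero_or_pos j with rfl | hj0
    · rw [Nat.cast_zero, add_zero, capUniqueTop_of_isUniqueTopClass ha, Nat.cast_le] at hk
      omega
    have haj : ¬ IsUniqueTopClass n w (a + j) := fun h => by
      have := Int.natAbs_le_of_dvd_ne_zero (ha.2 _ h.1) (by omega)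
      omega
    have hwit : ((n - 1 - j : ℕ) : ℕ∞) < u (-(a + j) - 1 - (n - 1 - j : ℕ)) := by
      rw [show -(a + j) - 1 - ((n - 1 - j : ℕ) : ℤ) = -a - n by omega, hper.sub_eq,
        hu.eq_of_isUniqueTopClass_dualReach hper hn ha, Nat.cast_lt]
      omega
    have := (capUniqueTop_of_not_isUniqueTopClass haj ▸ hk).trans (dualReach_le hwit)
    rw [Nat.cast_le] at this
    omega
  · rw [capUniqueTop_of_not_isUniqueTopClass ha] at hj ⊢
    have haj : ¬ IsUniqueTopClass n w (a + j) := fun h => by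
      refine ha (h.of_eq_top (ENat.eq_top_iff_forall_ge.2 fun m => ?_))
      refine le_trans (by gcongr; omega) (isNested_dualReach u a j m hj ?_)
      exact le_top.trans_eq h.1.symm
    rw [capUniqueTop_of_not_isUniqueTopClass haj] at hk
    exact isNested_dualReach u a j k hj hk

theorem IsNested.dualReach_capUniqueTop_dualReach_of_dvd (hu : IsNested u) (hper : u.Periodic n)
    (hn : 0 < n) {p : ℤ} (hp : IsUniqueTopClass n (dualReach u) p) {x : ℤ}
    (hx : (n : ℤ) ∣ x + p) : dualReach (capUniqueTop n (dualReach u)) x = ⊤ := by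
  have hwper := periodic_dualReach hper
  rw [dualReach_eq_top_iff]
  intro i
  rw [hp.capUniqueTop_eq hwper]
  split_ifs with hy
  · have := Int.natAbs_le_of_dvd_ne_zero (dvd_add hy hx) (by omega)
    rw [Nat.cast_le]
    omega
  rcases lt_or_ge i (n - 1) with hi | hi
  · have hux : ((i + 1 : ℕ) : ℕ∞) ≤ dualReach (dualReach u) x := by
      rw [hu.dualReach_dualReach, hper.eq_of_dvd (x := -p) (by simpa using hx),
        hu.eq_of_isUniqueTopClass_dualReach hper hn hp, Nat.cast_le]
      omega
    exact natCast_le_dualReach_iff.1 hux i (by omega)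
  · refine ((isNested_dualReach u).le_of_ne_top hwper hn fun h => hy (hp.2 _ h)).trans ?_
    gcongr

theorem IsNested.dualReach_capUniqueTop_dualReach_of_not_dvd (hu : IsNested u)
    (hper : u.Periodic n) (hn : 0 < n) {p : ℤ} (hp : IsUniqueTopClass n (dualReach u) p) {x : ℤ}
    (hx : ¬ (n : ℤ) ∣ x + p) : dualReach (capUniqueTop n (dualReach u)) x = u x := by
  have hfin : u x ≠ ⊤ := fun h => dualReach_ne_top_of_eq_top hper hn h p hp.1
  obtain ⟨c, hc⟩ := ENat.ne_top_iff_exists.1 hfin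
  refine le_antisymm ?_ ?_
  · rw [← hc]
    refine dualReach_le ?_
    rw [hp.capUniqueTop_eq (periodic_dualReach hper)]
    split_ifs with hy
    · have hcn := hu.le_of_ne_top hper hn hfin
      rw [← hc, Nat.cast_le] at hcn
      rw [Nat.cast_lt]
      refine lt_of_le_of_ne hcn fun hcn' => hx ?_
      rw [show x + p = -(-x - 1 - c - p) - n by omega]
      exact dvd_sub (dvd_neg.2 hy) dvd_rfl
    · exact hu.natCast_lt_dualReach hc.symm
  · calc u x = dualReach (dualReach u) x := by rw [hu.dualReach_dualReach]
      _ ≤ _ := antitone_dualReach capUniqueTop_le x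

theorem IsNested.capUniqueTop_dualReach_capUniqueTop_dualReach (hu : IsNested u)
    (hper : u.Periodic n) (hn : 0 < n) (hvalid : ∀ p, ¬ IsUniqueTopClass n u p) :
    capUniqueTop n (dualReach (capUniqueTop n (dualReach u))) = u := by
  by_cases h : ∃ p, IsUniqueTopClass n (dualReach u) p
  · obtain ⟨p, hp⟩ := h
    have hfin (x : ℤ) : u x ≠ ⊤ := fun hx => dualReach_ne_top_of_eq_top hper hn hx p hp.1
    funext x
    by_cases hx : (n : ℤ) ∣ x + p
    · have hcls : IsUniqueTopClass n (dualReach (capUniqueTop n (dualReach u))) x := by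
        refine ⟨hu.dualReach_capUniqueTop_dualReach_of_dvd hper hn hp hx, fun b hb => ?_⟩
        have hb' : (n : ℤ) ∣ b + p := by
          by_contra hb'
          rw [hu.dualReach_capUniqueTop_dualReach_of_not_dvd hper hn hp hb'] at hb
          exact hfin b hb
        simpa using dvd_sub hb' hx
      rw [capUniqueTop_of_isUniqueTopClass hcls, hper.eq_of_dvd (x := -p) (by simpa using hx),
        hu.eq_of_isUniqueTopClass_dualReach hper hn hp]
    · have hux := hu.dualReach_capUniqueTop_dualReach_of_not_dvd hper hn hp hx
      rw [capUniqueTop_of_not_isUniqueTopClass fun h => hfin x (hux ▸ h.1), hux]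
  · rw [not_exists] at h
    rw [capUniqueTop_eq_self h, hu.dualReach_dualReach, capUniqueTop_eq_self hvalid]

end

def Covers (u : ℤ → ℕ∞) (a b : ℤ) : Prop := ((b - a).toNat : ℕ∞) ≤ u a

def coverRel (u : ℤ → ℕ∞) (x y : ℤ) : Prop := if x < y then ¬ Covers u x y else Covers u y x

section

variable {n : ℕ} {u : ℤ → ℕ∞} {a b c : ℤ}

theorem Covers.of_le (hbc : b ≤ c) (h : Covers u a c) : Covers u a b :=
  le_trans (by gcongr; omega) h

theorem IsNested.covers_trans (hu : IsNested u) (hab : a ≤ b) (hbc : b ≤ c) (h₁ : Covers u a b)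
    (h₂ : Covers u b c) : Covers u a c := by
  have := hu a (b - a).toNat (c - b).toNat h₁ (by rwa [show a + ((b - a).toNat : ℕ) = b by omega])
  rwa [show (b - a).toNat + (c - b).toNat = (c - a).toNat by omega] at this

theorem coverRel_of_lt (h : a < b) : coverRel u a b ↔ ¬ Covers u a b := by
  simp [coverRel, h]

theorem coverRel_of_le (h : b ≤ a) : coverRel u a b ↔ Covers u b a := by
  simp [coverRel, not_lt.2 h]

theorem IsNested.coverRel_trans (hu : IsNested u) (hab : coverRel u a b) (hbc : coverRel u b c) :
    coverRel u a c := by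
  rcases lt_or_ge a b with h₁ | h₁ <;> rcases lt_or_ge b c with h₂ | h₂
  · rw [coverRel_of_lt h₁] at hab
    rw [coverRel_of_lt (h₁.trans h₂)]
    exact fun h => hab (h.of_le h₂.le)
  · rw [coverRel_of_lt h₁] at hab
    rw [coverRel_of_le h₂] at hbc
    rcases lt_or_ge a c with h₃ | h₃
    · rw [coverRel_of_lt h₃]
      exact fun h => hab (hu.covers_trans h₃.le h₂ h hbc)
    · rw [coverRel_of_le h₃]
      exact hbc.of_le h₁.le
  · rw [coverRel_of_le h₁] at hab
    rw [coverRel_of_lt h₂] at hbc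
    rcases lt_or_ge a c with h₃ | h₃
    · rw [coverRel_of_lt h₃]
      exact fun h => hbc (hu.covers_trans h₁ h₃.le hab h)
    · exact absurd (hab.of_le h₃) hbc
  · rw [coverRel_of_le h₁] at hab
    rw [coverRel_of_le h₂] at hbc
    rw [coverRel_of_le (h₂.trans h₁)]
    exact hu.covers_trans h₂ h₁ hbc hab

theorem coverRel_refl : coverRel u a a := by
  simp [coverRel, Covers]

theorem coverRel_antisymm (hab : coverRel u a b) (hba : coverRel u b a) : a = b := by
  rcases lt_trichotomy a b with h | h | h
  · exact absurd ((coverRel_of_le h.le).1 hba) ((coverRel_of_lt h).1 hab)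
  · exact h
  · exact absurd ((coverRel_of_le h.le).1 hab) ((coverRel_of_lt h).1 hba)

theorem coverRel_total (a b : ℤ) : coverRel u a b ∨ coverRel u b a := by
  rcases lt_or_ge a b with h | h
  · rw [coverRel_of_lt h, coverRel_of_le h.le]
    exact (em _).symm
  · rcases h.lt_or_eq with h | rfl
    · rw [coverRel_of_le h.le, coverRel_of_lt h]
      exact em _
    · exact Or.inl coverRel_refl

def IsNested.toTITO (hu : IsNested u) (hper : u.Periodic n) : TITO n where
  rel := coverRel u
  refl _ := coverRel_refl
  antisymm _ _ := coverRel_antisymm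
  trans _ _ _ := hu.coverRel_trans
  total := coverRel_total
  invariant a b := by simp only [coverRel, Covers, add_lt_add_iff_right, add_sub_add_right_eq_sub,
    hper a, hper b]

end

namespace TITO

variable {n : ℕ} {t t₁ t₂ : TITO n}

noncomputable def reach (t : TITO n) (x : ℤ) : ℕ∞ :=
  ⨆ (j : ℕ) (_ : t.rel (x + j) x), (j : ℕ∞)

theorem Avoids312.rel_add_of_le (h : t.Avoids312) {x : ℤ} {i j : ℕ} (hij : i ≤ j)
    (hj : t.rel (x + j) x) : t.rel (x + i) x := by
  rcases Nat.eq_zero_or_pos i with rfl | hi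
  · simpa using t.refl x
  rcases hij.eq_or_lt with rfl | hij
  · exact hj
  exact t.rel_of_not_rel fun hxi => h ⟨x, x + i, x + j, by omega, by omega, hj, hxi⟩

theorem Avoids312.natCast_le_reach_iff (h : t.Avoids312) {x : ℤ} {j : ℕ} :
    (j : ℕ∞) ≤ t.reach x ↔ t.rel (x + j) x := by
  refine ⟨fun hj => ?_, fun hj => le_iSup₂ (f := fun (j : ℕ) _ => (j : ℕ∞)) j hj⟩
  rcases Nat.eq_zero_or_pos j with rfl | hj0
  · simpa using t.refl x
  have : ((j - 1 : ℕ) : ℕ∞) < t.reach x := lt_of_lt_of_le (by gcongr; omega) hj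
  obtain ⟨i, hi⟩ := lt_iSup_iff.1 this
  obtain ⟨hi, hji⟩ := lt_iSup_iff.1 hi
  exact h.rel_add_of_le (by rw [Nat.cast_lt] at hji; omega) hi

theorem periodic_reach (t : TITO n) : t.reach.Periodic n := by
  intro x
  simp only [reach, show ∀ j : ℤ, x + n + j = x + j + n by intro; ring, ← t.invariant]

theorem Avoids312.isNested_reach (h : t.Avoids312) : IsNested t.reach := by
  intro a j k hj hk
  rw [h.natCast_le_reach_iff] at *
  push_cast
  rw [← add_assoc]
  exact t.trans _ _ _ hk hj

theorem rel_add_mul_of_rel {x : ℤ} (hx : t.rel (x + n) x) (m : ℕ) : t.rel (x + (m * n : ℕ)) x := by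
  induction m with
  | zero => simpa using t.refl x
  | succ m ih =>
    refine t.trans _ (x + n) _ ?_ hx
    rw [show x + ((m + 1) * n : ℕ) = x + (m * n : ℕ) + n by push_cast; ring, ← t.invariant]
    exact ih

theorem Avoids312.reach_eq_top_iff (h : t.Avoids312) (hn : 0 < n) {x : ℤ} :
    t.reach x = ⊤ ↔ t.rel (x + n) x := by
  refine ⟨fun hx => h.natCast_le_reach_iff.1 (hx ▸ le_top), fun hx => ?_⟩
  refine ENat.eq_top_iff_forall_ge.2 fun m => h.natCast_le_reach_iff.2 ?_
  exact h.rel_add_of_le (Nat.le_mul_of_pos_right m hn) (rel_add_mul_of_rel hx m)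

theorem Avoids312.orderConvex_residueClass (h : t.Avoids312) (hn : 0 < n) {p : ℤ}
    (hp : IsUniqueTopClass n t.reach p) : t.OrderConvex (residueClass n p) := by
  intro x hx _ _ y hxy _
  by_contra hy
  have hyfin : ¬ t.rel (y + n) y := fun h' =>
    hy (mem_residueClass.2 (hp.2 y ((h.reach_eq_top_iff hn).2 h')))
  have hxtop : t.reach x = ⊤ := by
    rw [t.periodic_reach.eq_of_dvd (mem_residueClass.1 hx), hp.1]
  set m := (y + n - x).toNat
  have hx' : t.rel (x + m) x := h.natCast_le_reach_iff.1 (hxtop ▸ le_top)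
  have hy' : t.rel y (x + m) := t.rel_of_not_rel fun h' => hyfin <| by
    refine h.rel_add_of_le (j := (x + m - y).toNat) (by omega) ?_
    rwa [show y + ((x + m - y).toNat : ℕ) = x + m by omega]
  exact hy (t.antisymm x y hxy (t.trans _ _ _ hy' hx') ▸ hx)

theorem Avoids312.not_isUniqueTopClass_reach (h : t.Avoids312) (hn : 0 < n) (hreal : t.IsReal)
    (p : ℤ) : ¬ IsUniqueTopClass n t.reach p := fun hp => by
  have := t.antisymm _ _ (hreal p (h.orderConvex_residueClass hn hp))
    ((h.reach_eq_top_iff hn).1 hp.1)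
  omega

theorem Avoids312.isReal (h : t.Avoids312) (hn : 0 < n)
    (hvalid : ∀ p, ¬ IsUniqueTopClass n t.reach p) : t.IsReal := by
  intro a hconv
  by_contra hna
  have hatop : t.reach a = ⊤ := (h.reach_eq_top_iff hn).2 (t.rel_of_not_rel hna)
  obtain ⟨b, hb, hba⟩ : ∃ b, t.reach b = ⊤ ∧ ¬ (n : ℤ) ∣ b - a := by
    simpa [IsUniqueTopClass, hatop] using hvalid a
  set r := (b - a) % n with hr
  have hr0 : 0 ≤ r := Int.emod_nonneg _ (by omega)
  have hrn : r < n := Int.emod_lt_of_pos _ (by omega)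
  have hrtop : t.reach (a + r) = ⊤ := by
    rw [t.periodic_reach.eq_of_dvd (x := b), hb]
    rw [show a + r - b = -(b - a - r) by ring, dvd_neg]
    exact Int.dvd_self_sub_of_emod_eq hr.symm
  have h₁ : t.rel (a + n) (a + r) := by
    have := h.natCast_le_reach_iff.1 (hrtop ▸ le_top : ((n - r).toNat : ℕ∞) ≤ _)
    rwa [show a + r + ((n - r).toNat : ℕ) = a + n by omega] at this
  have h₂ : t.rel (a + r) a := by
    have := h.natCast_le_reach_iff.1 (hatop ▸ le_top : (r.toNat : ℕ∞) ≤ _)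
    rwa [show a + (r.toNat : ℕ) = a + r by omega] at this
  have hmem : a + r ∈ residueClass n a := hconv (a + n) ⟨1, by ring⟩ a ⟨0, by ring⟩ (a + r) h₁ h₂
  rw [mem_residueClass, add_sub_cancel_left] at hmem
  have := Int.natAbs_le_of_dvd_ne_zero hmem
  exact hba (Int.dvd_of_emod_eq_zero (by omega))

theorem Avoids312.covers_reach_iff (h : t.Avoids312) {a b : ℤ} (hab : a ≤ b) :
    Covers t.reach a b ↔ t.rel b a := by
  rw [Covers, h.natCast_le_reach_iff, show a + ((b - a).toNat : ℕ) = b by omega]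

theorem Avoids312.rel_iff_coverRel (h : t.Avoids312) {a b : ℤ} :
    t.rel a b ↔ coverRel t.reach a b := by
  rcases lt_or_ge a b with hab | hab
  · rw [coverRel_of_lt hab, h.covers_reach_iff hab.le]
    exact ⟨fun h₁ h₂ => hab.ne (t.antisymm _ _ h₁ h₂), t.rel_of_not_rel⟩
  · rw [coverRel_of_le hab, h.covers_reach_iff hab]

theorem avoids312_toTITO {u : ℤ → ℕ∞} (hu : IsNested u) (hper : u.Periodic n) :
    (hu.toTITO hper).Avoids312 := by
  rintro ⟨a, b, c, hab, hbc, hca, hab'⟩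
  exact (coverRel_of_lt hab).1 hab' (((coverRel_of_le (hab.trans hbc).le).1 hca).of_le hbc.le)

theorem reach_toTITO {u : ℤ → ℕ∞} (hu : IsNested u) (hper : u.Periodic n) :
    (hu.toTITO hper).reach = u := by
  funext x
  refine ENat.eq_of_forall_natCast_le_iff fun j => ?_
  rw [(avoids312_toTITO hu hper).natCast_le_reach_iff]
  change coverRel u _ _ ↔ _
  rw [coverRel_of_le (by omega), Covers, show x + (j : ℤ) - x = j by ring, Int.toNat_natCast]

theorem Avoids312.inversions_subset_iff (h₁ : t₁.Avoids312) (h₂ : t₂.Avoids312) :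
    t₁.Inversions ⊆ t₂.Inversions ↔ t₁.reach ≤ t₂.reach := by
  refine ⟨fun h x => ENat.forall_natCast_le_iff_le.1 fun j hj => ?_, fun h ⟨a, b⟩ ⟨hab, hba⟩ => ?_⟩
  · rcases Nat.eq_zero_or_pos j with rfl | hj0
    · simp
    have := (h (show (x, x + j) ∈ t₁.Inversions from ⟨by omega, h₁.natCast_le_reach_iff.1 hj⟩)).2
    exact h₂.natCast_le_reach_iff.2 this
  · refine ⟨hab, (h₂.covers_reach_iff hab.le).1 ?_⟩
    exact ((h₁.covers_reach_iff hab.le).2 hba).trans (h a)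

noncomputable def dual312 (hn : 0 < n) (t : {t : TITO n // t.Avoids312 ∧ t.IsReal}) :
    {t : TITO n // t.Avoids312 ∧ t.IsReal} :=
  have hu := t.2.1.isNested_reach.isNested_capUniqueTop_dualReach t.1.periodic_reach hn
  have hper := periodic_capUniqueTop (periodic_dualReach t.1.periodic_reach)
  ⟨hu.toTITO hper, avoids312_toTITO hu hper, (avoids312_toTITO hu hper).isReal hn <| by
    rw [reach_toTITO]
    exact not_isUniqueTopClass_capUniqueTop⟩

theorem reach_dual312 (hn : 0 < n) (t : {t : TITO n // t.Avoids312 ∧ t.IsReal}) :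
    (dual312 hn t).1.reach = capUniqueTop n (dualReach t.1.reach) :=
  reach_toTITO (t.2.1.isNested_reach.isNested_capUniqueTop_dualReach t.1.periodic_reach hn)
    (periodic_capUniqueTop (periodic_dualReach t.1.periodic_reach))

theorem dual312_involutive (hn : 0 < n) : Function.Involutive (dual312 hn) := by
  intro t
  apply Subtype.ext
  ext a b
  change coverRel (capUniqueTop n (dualReach (dual312 hn t).1.reach)) a b ↔ _
  rw [reach_dual312, t.2.1.isNested_reach.capUniqueTop_dualReach_capUniqueTop_dualReach
    t.1.periodic_reach hn (t.2.1.not_isUniqueTopClass_reach hn t.2.2), ← t.2.1.rel_iff_coverRel]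

theorem inversions_dual312_subset_dual312 (hn : 0 < n)
    {t₁ t₂ : {t : TITO n // t.Avoids312 ∧ t.IsReal}} (h : t₁.1.Inversions ⊆ t₂.1.Inversions) :
    (dual312 hn t₂).1.Inversions ⊆ (dual312 hn t₁).1.Inversions := by
  rw [Avoids312.inversions_subset_iff (dual312 hn t₂).2.1 (dual312 hn t₁).2.1, reach_dual312,
    reach_dual312]
  rw [t₁.2.1.inversions_subset_iff t₂.2.1] at h
  exact (isNested_dualReach _).capUniqueTop_mono (periodic_dualReach t₂.1.periodic_reach) hn
    (antitone_dualReach h)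

theorem inversions_dual312_subset_dual312_iff (hn : 0 < n)
    {t₁ t₂ : {t : TITO n // t.Avoids312 ∧ t.IsReal}} :
    (dual312 hn t₂).1.Inversions ⊆ (dual312 hn t₁).1.Inversions ↔
      t₁.1.Inversions ⊆ t₂.1.Inversions := by
  refine ⟨fun h => ?_, inversions_dual312_subset_dual312 hn⟩
  simpa only [dual312_involutive hn _] using inversions_dual312_subset_dual312 hn h

end TITO

theorem stmt9 (n : ℕ) (hn : 2 ≤ n) :
    (∃ φ : {t : TITO n // t.Avoids312 ∧ t.IsReal} → {t : TITO n // t.Avoids132 ∧ t.IsCoReal},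
      Function.Bijective φ ∧
      ∀ x y : {t : TITO n // t.Avoids312 ∧ t.IsReal},
        x.val.Inversions ⊆ y.val.Inversions ↔ (φ x).val.Inversions ⊆ (φ y).val.Inversions) ∧
    (∃ ψ : {t : TITO n // t.Avoids312 ∧ t.IsReal} → {t : TITO n // t.Avoids312 ∧ t.IsReal},
      Function.Bijective ψ ∧
      ∀ x y : {t : TITO n // t.Avoids312 ∧ t.IsReal},
        x.val.Inversions ⊆ y.val.Inversions ↔ (ψ y).val.Inversions ⊆ (ψ x).val.Inversions) := by
  have hn₀ : 0 < n := by omega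
  have hψ := TITO.dual312_involutive hn₀
  refine ⟨⟨TITO.negEquiv ∘ TITO.dual312 hn₀, TITO.negEquiv.bijective.comp hψ.bijective,
    fun x y => ?_⟩, ⟨TITO.dual312 hn₀, hψ.bijective,
    fun x y => (TITO.inversions_dual312_subset_dual312_iff hn₀).symm⟩⟩
  rw [← TITO.inversions_dual312_subset_dual312_iff hn₀]
  exact TITO.inversions_neg_subset_neg_iff.symm
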